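/- arXiv:2102.07281 — 3 statements merged into one kernel-verified Lean document; each statement's English description precedes it below -/
import Mathlib

section
/- Let h be a harmonic function on ℝ^d that is N₁-homogeneous with respect to the origin (i.e., h(λZ) - h(0) = λ^{N₁}(h(Z) - h(0)) for all Z and λ > 0) and N₂-homogeneous with respect to a point X ≠ 0. Then N₁ = N₂, and either h is an affine (degree-1) function, or h is invariant in the X-direction: h(tX + Y) = h(Y) for all Y ∈ ℝ^d and t ∈ ℝ. -/
open scoped RealInnerProductSpace

/-- The Laplacian of `h` at `x`, as the trace of the second derivative. -/
noncomputable def lap {d : ℕ} (h : EuclideanSpace ℝ (Fin d) → ℝ)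
    (x : EuclideanSpace ℝ (Fin d)) : ℝ :=
  ∑ i : Fin d, iteratedFDeriv ℝ 2 h x ![EuclideanSpace.single i 1, EuclideanSpace.single i 1]

/-- `h` is harmonic on `s`: it is `C²` there and its Laplacian vanishes. -/
def IsHarmonicOn {d : ℕ} (h : EuclideanSpace ℝ (Fin d) → ℝ)
    (s : Set (EuclideanSpace ℝ (Fin d))) : Prop :=
  ContDiffOn ℝ 2 h s ∧ ∀ x ∈ s, lap h x = 0

/-- `h` is `N`-homogeneous with respect to the vertex `X`:
`h (X + λ • Z) - h X = λ ^ N * (h (X + Z) - h X)` for all `Z` and `λ > 0`. -/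
def HomogeneousWrt {d : ℕ} (h : EuclideanSpace ℝ (Fin d) → ℝ)
    (X : EuclideanSpace ℝ (Fin d)) (N : ℕ) : Prop :=
  ∀ (Z : EuclideanSpace ℝ (Fin d)) (l : ℝ), 0 < l →
    h (X + l • Z) - h X = l ^ N * (h (X + Z) - h X)

open Filter Topology

/-- helper: `2 ^ N = 2` in `ℝ` forces `N = 1`. -/
lemma aux_pow_eq_two {N : ℕ} (hN : (2:ℝ) ^ N = 2) : N = 1 := by
  have h1 : ((2 ^ N : ℕ) : ℝ) = ((2 ^ 1 : ℕ) : ℝ) := by push_cast; simpa using hN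
  have h2 : (2:ℕ) ^ N = 2 ^ 1 := Nat.cast_injective h1
  exact Nat.pow_right_injective le_rfl h2

/-- A nontrivial harmonic function on `ℝ^d` which is `N₁`-homogeneous with respect to the
origin and `N₂`-homogeneous with respect to `X ≠ 0` satisfies `N₁ = N₂`, and either it is
affine (degree one), or it is invariant in the `X`-direction. -/
theorem statement0 {d : ℕ} (h : EuclideanSpace ℝ (Fin d) → ℝ)
    (hharm : IsHarmonicOn h Set.univ)
    (hnc : ¬ ∀ z, h z = h 0)
    (X : EuclideanSpace ℝ (Fin d)) (hX : X ≠ 0)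
    (N₁ N₂ : ℕ)
    (h₁ : HomogeneousWrt h 0 N₁) (h₂ : HomogeneousWrt h X N₂) :
    N₁ = N₂ ∧
      ((∃ (L : EuclideanSpace ℝ (Fin d) →L[ℝ] ℝ) (b : ℝ), ∀ z, h z = L z + b) ∨
        ∀ (t : ℝ) (Y : EuclideanSpace ℝ (Fin d)), h (t • X + Y) = h Y) := by
  have hcd : ContDiff ℝ 2 h := contDiffOn_univ.mp hharm.1
  have hcont : Continuous h := hcd.continuous
  have hdiff : Differentiable ℝ h := hcd.differentiable (by norm_num)
  -- tendsto of h along scaled lines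
  have tend : ∀ (A B : EuclideanSpace ℝ (Fin d)),
      Tendsto (fun μ : ℝ => h (B + μ • A)) (𝓝[>] 0) (𝓝 (h B)) := by
    intro A B
    have hc : Continuous fun μ : ℝ => h (B + μ • A) :=
      hcont.comp (continuous_const.add (continuous_id.smul continuous_const))
    have := hc.tendsto 0
    simp only [zero_smul, add_zero] at this
    exact this.mono_left nhdsWithin_le_nhds
  have hpow0 : ∀ k : ℕ, k ≠ 0 → Tendsto (fun μ : ℝ => μ ^ k) (𝓝[>] (0:ℝ)) (𝓝 0) := by
    intro k hk
    have := (continuous_pow k (M := ℝ)).tendsto 0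
    rw [zero_pow hk] at this
    exact this.mono_left nhdsWithin_le_nhds
  -- every degree of homogeneity is positive
  have hposdeg : ∀ (Y : EuclideanSpace ℝ (Fin d)) (N : ℕ), HomogeneousWrt h Y N → N ≠ 0 := by
    intro Y N hN h0
    subst h0
    apply hnc
    have hY : ∀ Z, h (Y + Z) = h Y := by
      intro Z
      have t2 : Tendsto (fun l : ℝ => h (Y + l • Z)) (𝓝[>] 0) (𝓝 (h (Y + Z))) := by
        apply tendsto_const_nhds.congr'
        filter_upwards [self_mem_nhdsWithin] with l hl
        have := hN Z l hl
        simp only [pow_zero, one_mul] at this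
        linarith
      have := tendsto_nhds_unique (tend Z Y) t2
      linarith [this]
    intro z
    have e1 : h z = h Y := by
      have := hY (z - Y); rwa [show Y + (z - Y) = z by abel] at this
    have e2 : h 0 = h Y := by
      have := hY (0 - Y)
      rwa [show Y + ((0:EuclideanSpace ℝ (Fin d)) - Y) = 0 by abel] at this
    rw [e1, e2]
  -- degree-1 homogeneity at a point gives affineness
  have haffine : ∀ (Y : EuclideanSpace ℝ (Fin d)), HomogeneousWrt h Y 1 →
      ∀ z, h z = (fderiv ℝ h Y) (z - Y) + h Y := by
    intro Y hN z
    set L := fderiv ℝ h Y with hL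
    set Z := z - Y with hZdef
    have hd : HasFDerivAt h L Y := (hdiff Y).hasFDerivAt
    have hline : HasDerivAt (fun t : ℝ => Y + t • Z) Z 0 := by
      simpa using ((hasDerivAt_id (0:ℝ)).smul_const Z).const_add Y
    have hcurve : HasDerivAt (fun t : ℝ => h (Y + t • Z)) (L Z) 0 := by
      have hd' : HasFDerivAt h L (Y + (0:ℝ) • Z) := by simpa using hd
      have := hd'.comp_hasDerivAt 0 hline
      exact this
    have hslope : Tendsto (slope (fun t : ℝ => h (Y + t • Z)) 0) (𝓝[>] 0) (𝓝 (L Z)) :=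
      (hasDerivAt_iff_tendsto_slope.mp hcurve).mono_left
        (nhdsWithin_mono _ fun x hx => ne_of_gt hx)
    have hconst : Tendsto (slope (fun t : ℝ => h (Y + t • Z)) 0) (𝓝[>] 0)
        (𝓝 (h (Y + Z) - h Y)) := by
      apply tendsto_const_nhds.congr'
      filter_upwards [self_mem_nhdsWithin] with t ht
      have h0 := hN Z t ht
      simp only [pow_one] at h0
      have ht' : (t:ℝ) ≠ 0 := ne_of_gt ht
      rw [slope_def_field]
      simp only [zero_smul, add_zero, sub_zero]
      rw [h0, mul_comm, mul_div_assoc, div_self ht', mul_one]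
    have hLZ : L Z = h (Y + Z) - h Y := tendsto_nhds_unique hslope hconst
    have : h (Y + Z) = L Z + h Y := by linarith
    rwa [show Y + Z = z by rw [hZdef]; abel] at this
  -- affine nonconstant functions only have degree-1 homogeneity
  have haffdeg : ∀ (L : EuclideanSpace ℝ (Fin d) →L[ℝ] ℝ) (b : ℝ), (∀ z, h z = L z + b) →
      ∀ (Y : EuclideanSpace ℝ (Fin d)) (N : ℕ), HomogeneousWrt h Y N → N = 1 := by
    intro L b hLb Y N hN
    obtain ⟨Z₀, hZ₀⟩ : ∃ Z, L Z ≠ 0 := by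
      by_contra hc
      push_neg at hc
      exact hnc fun z => by simp [hLb, hc]
    have key := hN Z₀ 2 (by norm_num)
    simp only [hLb, map_add, map_smul, smul_eq_mul] at key
    -- key : L Y + 2 * L Z₀ + b - (L Y + b) = 2 ^ N * (L Y + L Z₀ + b - (L Y + b))
    have hkey : (2:ℝ) * L Z₀ = 2 ^ N * L Z₀ := by linarith
    have hz : ((2:ℝ) - 2 ^ N) * L Z₀ = 0 := by ring_nf; linarith [hkey]
    rcases mul_eq_zero.mp hz with he | he
    · exact aux_pow_eq_two (by linarith)
    · exact absurd he hZ₀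
  by_cases e1 : N₁ = 1
  · -- affine case via the origin
    have haff := haffine 0 (e1 ▸ h₁)
    set L := fderiv ℝ h 0 with hL
    have haff' : ∀ z, h z = L z + h 0 := by
      intro z; simpa using haff z
    have e2 : N₂ = 1 := haffdeg L (h 0) haff' X N₂ h₂
    exact ⟨by omega, Or.inl ⟨L, h 0, haff'⟩⟩
  by_cases e2 : N₂ = 1
  · -- affine via X, contradicts e1
    have haff := haffine X (e2 ▸ h₂)
    set L := fderiv ℝ h X with hL
    have haff' : ∀ z, h z = L z + (h X - L X) := by
      intro z
      have := haff z
      rw [map_sub] at this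
      linarith
    have : N₁ = 1 := haffdeg L (h X - L X) haff' 0 N₁ h₁
    exact absurd this e1
  -- main case: both degrees ≥ 2
  have hN₁pos := hposdeg 0 N₁ h₁
  have hN₂pos := hposdeg X N₂ h₂
  -- key scaling identity
  have key : ∀ (Z : EuclideanSpace ℝ (Fin d)) (μ : ℝ), 0 < μ →
      h (μ • X + Z) - h 0 =
        μ ^ N₁ * (h X - h 0) + (μ ^ N₁ * (μ⁻¹) ^ N₂) * (h (X + Z) - h X) := by
    intro Z μ hμ
    have e0 : μ • X + Z = μ • (X + μ⁻¹ • Z) := by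
      rw [smul_add, smul_smul, mul_inv_cancel₀ hμ.ne', one_smul]
    have eA := h₁ (X + μ⁻¹ • Z) μ hμ
    simp only [zero_add] at eA
    have eB := h₂ Z μ⁻¹ (inv_pos.mpr hμ)
    rw [e0]
    have hrw : h (X + μ⁻¹ • Z) - h 0 = (μ⁻¹) ^ N₂ * (h (X + Z) - h X) + (h X - h 0) := by
      linarith
    rw [eA, hrw]
    ring
  rcases lt_trichotomy N₁ N₂ with hlt | heq | hgt
  · -- N₁ < N₂ : contradiction
    exfalso
    have hXZ : ∀ Z : EuclideanSpace ℝ (Fin d), h (X + Z) = h X := by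
      intro Z
      have hpowprod : ∀ μ : ℝ, 0 < μ → μ ^ (N₂ - N₁) * (μ ^ N₁ * (μ⁻¹) ^ N₂) = 1 := by
        intro μ hμ
        rw [← mul_assoc, ← pow_add, inv_pow]
        rw [show N₂ - N₁ + N₁ = N₂ by omega]
        exact mul_inv_cancel₀ (pow_ne_zero _ hμ.ne')
      have t1 : Tendsto (fun μ : ℝ =>
          μ ^ (N₂ - N₁) * (h (μ • X + Z) - h 0 - μ ^ N₁ * (h X - h 0)))
          (𝓝[>] 0) (𝓝 0) := by
        have a := hpow0 (N₂ - N₁) (by omega)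
        have b : Tendsto (fun μ : ℝ => h (μ • X + Z) - h 0 - μ ^ N₁ * (h X - h 0))
            (𝓝[>] 0) (𝓝 (h Z - h 0 - 0 * (h X - h 0))) := by
          refine Tendsto.sub (Tendsto.sub ?_ tendsto_const_nhds)
            ((hpow0 N₁ hN₁pos).mul tendsto_const_nhds)
          exact (tend X Z).congr (by intro μ; rw [add_comm])
        simpa using a.mul b
      have t2 : Tendsto (fun μ : ℝ =>
          μ ^ (N₂ - N₁) * (h (μ • X + Z) - h 0 - μ ^ N₁ * (h X - h 0)))
          (𝓝[>] 0) (𝓝 (h (X + Z) - h X)) := by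
        apply tendsto_const_nhds.congr'
        filter_upwards [self_mem_nhdsWithin] with μ hμ
        have k := key Z μ hμ
        have hp := hpowprod μ hμ
        calc h (X + Z) - h X
            = (μ ^ (N₂ - N₁) * (μ ^ N₁ * (μ⁻¹) ^ N₂)) * (h (X + Z) - h X) := by
              rw [hp]; ring
          _ = μ ^ (N₂ - N₁) * (h (μ • X + Z) - h 0 - μ ^ N₁ * (h X - h 0)) := by
              rw [show h (μ • X + Z) - h 0 - μ ^ N₁ * (h X - h 0)
                  = (μ ^ N₁ * (μ⁻¹) ^ N₂) * (h (X + Z) - h X) by linarith]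
              ring
      have := tendsto_nhds_unique t2 t1
      linarith
    apply hnc
    intro z
    have ea : h z = h X := by
      have := hXZ (z - X); rwa [show X + (z - X) = z by abel] at this
    have eb : h 0 = h X := by
      have := hXZ (0 - X)
      rwa [show X + ((0:EuclideanSpace ℝ (Fin d)) - X) = 0 by abel] at this
    rw [ea, eb]
  · -- N₁ = N₂
    subst heq
    -- shift identity
    have shift : ∀ Z : EuclideanSpace ℝ (Fin d), h (X + Z) = h Z + (h X - h 0) := by
      intro Z
      have t1 : Tendsto (fun μ : ℝ => h (μ • X + Z) - h 0) (𝓝[>] 0) (𝓝 (h Z - h 0)) := by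
        refine Tendsto.sub ?_ tendsto_const_nhds
        exact (tend X Z).congr (by intro μ; rw [add_comm])
      have t2 : Tendsto (fun μ : ℝ => h (μ • X + Z) - h 0) (𝓝[>] 0)
          (𝓝 (0 * (h X - h 0) + (h (X + Z) - h X))) := by
        apply Tendsto.congr' ?_ (((hpow0 N₁ hN₁pos).mul_const _).add tendsto_const_nhds)
        filter_upwards [self_mem_nhdsWithin] with μ hμ
        have k := key Z μ hμ
        have hp : μ ^ N₁ * (μ⁻¹) ^ N₁ = 1 := by
          rw [← mul_pow, mul_inv_cancel₀ hμ.ne', one_pow]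
        rw [k, hp]; ring
      have := tendsto_nhds_unique t1 t2
      simp only [zero_mul, zero_add] at this
      linarith
    -- translation by positive multiples of X
    have stepB : ∀ (W : EuclideanSpace ℝ (Fin d)) (l : ℝ), 0 < l →
        h (l • X + W) = h W + l ^ N₁ * (h X - h 0) := by
      intro W l hl
      have e0 : l • X + W = l • (X + l⁻¹ • W) := by
        rw [smul_add, smul_smul, mul_inv_cancel₀ hl.ne', one_smul]
      have eA := h₁ (X + l⁻¹ • W) l hl
      simp only [zero_add] at eA
      have eB := h₁ (l⁻¹ • W) l hl
      simp only [zero_add] at eB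
      rw [smul_smul, mul_inv_cancel₀ hl.ne', one_smul] at eB
      have eC := shift (l⁻¹ • W)
      calc h (l • X + W) = h (l • (X + l⁻¹ • W)) := by rw [e0]
        _ = h 0 + l ^ N₁ * (h (X + l⁻¹ • W) - h 0) := by linarith
        _ = h 0 + l ^ N₁ * (h (l⁻¹ • W) + (h X - h 0) - h 0) := by rw [eC]
        _ = h 0 + l ^ N₁ * (h (l⁻¹ • W) - h 0) + l ^ N₁ * (h X - h 0) := by ring
        _ = h 0 + (h W - h 0) + l ^ N₁ * (h X - h 0) := by rw [← eB]
        _ = h W + l ^ N₁ * (h X - h 0) := by ring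
    -- the constant h X - h 0 vanishes
    have hc0 : h X - h 0 = 0 := by
      have hb1 := stepB 0 2 (by norm_num)
      rw [add_zero] at hb1
      have hb2 := stepB X 1 (by norm_num)
      rw [one_smul, one_pow, one_mul] at hb2
      rw [show (2:ℝ) • X = X + X from two_smul ℝ X] at hb1
      by_contra hcne
      have hmul : ((2:ℝ) ^ N₁ - 2) * (h X - h 0) = 0 := by linarith
      rcases mul_eq_zero.mp hmul with he | he
      · exact e1 (aux_pow_eq_two (by linarith))
      · exact hcne he
    refine ⟨rfl, Or.inr ?_⟩
    intro t Y
    rcases lt_trichotomy t 0 with ht | ht | ht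
    · have := stepB (t • X + Y) (-t) (by linarith)
      rw [hc0, mul_zero, add_zero] at this
      rw [show (-t) • X + (t • X + Y) = Y by module] at this
      exact this.symm
    · subst ht; rw [zero_smul, zero_add]
    · have := stepB Y t ht
      rw [hc0, mul_zero, add_zero] at this
      exact this
  · -- N₂ < N₁ : contradiction
    exfalso
    apply hnc
    intro Z
    have hpowprod : ∀ μ : ℝ, 0 < μ → μ ^ N₁ * (μ⁻¹) ^ N₂ = μ ^ (N₁ - N₂) := by
      intro μ hμ
      have hne : μ ^ N₂ ≠ 0 := pow_ne_zero _ hμ.ne'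
      field_simp
      rw [one_div, inv_pow, pow_sub₀ _ hμ.ne' hgt.le]
    have t1 : Tendsto (fun μ : ℝ => h (μ • X + Z) - h 0) (𝓝[>] 0) (𝓝 (h Z - h 0)) := by
      refine Tendsto.sub ?_ tendsto_const_nhds
      exact (tend X Z).congr (by intro μ; rw [add_comm])
    have t2 : Tendsto (fun μ : ℝ => h (μ • X + Z) - h 0) (𝓝[>] 0)
        (𝓝 (0 * (h X - h 0) + 0 * (h (X + Z) - h X))) := by
      apply Tendsto.congr' ?_ (((hpow0 N₁ hN₁pos).mul_const _).add
        ((hpow0 (N₁ - N₂) (by omega)).mul_const _))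
      filter_upwards [self_mem_nhdsWithin] with μ hμ
      have k := key Z μ hμ
      rw [k, hpowprod μ hμ]
    have := tendsto_nhds_unique t1 t2
    simp only [zero_mul, zero_add, add_zero] at this
    linarith
end

section
/- Let h be a harmonic function on ℝ^d that is N₁-homogeneous and N₂-homogeneous with respect to the origin and a point X ≠ 0 respectively, with h(X) = h(0). Then for all Z ∈ ℝ^d, ⟨∇h(Z), X⟩ = (N₁ - N₂)(h(Z) - h(0)). -/
local notation "⟪" x ", " y "⟫" => inner (𝕜 := ℝ) x y

private lemma euler_aux {d : ℕ} {h : EuclideanSpace ℝ (Fin d) → ℝ}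
    (hdiff : Differentiable ℝ h) {X : EuclideanSpace ℝ (Fin d)} {N : ℕ}
    (hom : HomogeneousWrt h X N) (Z : EuclideanSpace ℝ (Fin d)) :
    fderiv ℝ h Z (Z - X) = N * (h Z - h X) := by
  set W := Z - X with hW
  have hZ : X + (1:ℝ) • W = Z := by simp [hW]
  have hc : HasDerivAt (fun l : ℝ => X + l • W) W 1 := by
    simpa using ((hasDerivAt_id (1:ℝ)).smul_const W).const_add X
  have hF : HasFDerivAt h (fderiv ℝ h Z) (X + (1:ℝ) • W) := by
    rw [hZ]; exact (hdiff Z).hasFDerivAt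
  have hg1 : HasDerivAt (fun l : ℝ => h (X + l • W)) (fderiv ℝ h Z W) 1 :=
    hF.comp_hasDerivAt 1 hc
  have hg2 : HasDerivAt (fun l : ℝ => h X + l ^ N * (h Z - h X))
      ((N : ℝ) * (h Z - h X)) 1 := by
    have := (hasDerivAt_pow N (1:ℝ)).mul_const (h Z - h X)
    simpa using this.const_add (h X)
  have hev : (fun l : ℝ => h (X + l • W)) =ᶠ[nhds (1:ℝ)]
      (fun l : ℝ => h X + l ^ N * (h Z - h X)) := by
    filter_upwards [Ioi_mem_nhds (by norm_num : (0:ℝ) < 1)] with l hl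
    have := hom W l hl
    rw [show X + W = Z by simpa using hZ] at this
    linarith
  have := (hg1.congr_of_eventuallyEq hev.symm).unique hg2
  linarith

/-- If a harmonic function `h` on `ℝ^d` is `N₁`-homogeneous with respect to the origin and
`N₂`-homogeneous with respect to `X ≠ 0`, and `h X = h 0`, then
`⟨∇h(Z), X⟩ = (N₁ - N₂) (h Z - h 0)` for all `Z`. -/
theorem statement1 {d : ℕ} (h : EuclideanSpace ℝ (Fin d) → ℝ)
    (hharm : IsHarmonicOn h Set.univ)
    (X : EuclideanSpace ℝ (Fin d)) (hX : X ≠ 0)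
    (N₁ N₂ : ℕ)
    (h₁ : HomogeneousWrt h 0 N₁) (h₂ : HomogeneousWrt h X N₂)
    (hval : h X = h 0) :
    ∀ Z : EuclideanSpace ℝ (Fin d),
      ⟪gradient h Z, X⟫ = ((N₁ : ℝ) - (N₂ : ℝ)) * (h Z - h 0) := by
  intro Z
  have hdiff : Differentiable ℝ h := by
    have := hharm.1
    rw [contDiffOn_univ] at this
    exact this.differentiable (by norm_num)
  have hin : ⟪gradient h Z, X⟫ = fderiv ℝ h Z X := by
    rw [gradient]; exact InnerProductSpace.toDual_symm_apply
  have e1 := euler_aux hdiff h₁ Z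
  have e2 := euler_aux hdiff h₂ Z
  have hX0 : X = (Z - 0) - (Z - X) := by abel
  rw [hin, hX0, map_sub, e1, e2, hval]
  ring
end

section
/- Let N : (0, r₀] → [0, ∞) be given and suppose Ñ(r) := N(r) exp(C ∫₀^r θ(s)/s ds) is monotone increasing, where θ is a nonnegative Dini function (∫₀^{r₀} θ(s)/s ds < ∞). If (d/dr) log(H(r)/r^{d-1}) ≥ 2N(r)/r − C θ(r)/r for a positive function H, then for 0 < r₁ < r₂ ≤ r₀: H(r₂)/r₂^{d-1} ≥ (H(r₁)/r₁^{d-1}) · (r₂/r₁)^{2Ñ(r₁) exp(−C∫₀^{r₂} θ(s)/s ds)} · exp(−C ∫_{r₁}^{r₂} θ(s)/s ds). -/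
open MeasureTheory Set

/-- Abstract doubling property of the height function `H` of an almost-monotone frequency
`N`: if `Ñ(r) = N(r) exp(C ∫₀^r θ(s)/s ds)` is monotone increasing and
`(d/dr) log(H(r)/r^{d-1}) ≥ 2N(r)/r − Cθ(r)/r`, then for `0 < r₁ < r₂ ≤ r₀`,
`H(r₂)/r₂^{d-1} ≥ (H(r₁)/r₁^{d-1}) (r₂/r₁)^{2Ñ(r₁) exp(−C∫₀^{r₂}θ/s)} exp(−C∫_{r₁}^{r₂}θ/s)`. -/
theorem statement16 (d : ℕ) (hd : 1 ≤ d) (C r₀ : ℝ) (hC : 0 ≤ C) (hr₀ : 0 < r₀)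
    (θ : ℝ → ℝ) (hθ : ∀ s, 0 ≤ θ s)
    (hDini : IntervalIntegrable (fun s => θ s / s) volume 0 r₀)
    (N H : ℝ → ℝ)
    (hN0 : ∀ r ∈ Ioc (0 : ℝ) r₀, 0 ≤ N r)
    (hHpos : ∀ r ∈ Ioc (0 : ℝ) r₀, 0 < H r)
    (hmono : MonotoneOn (fun r => N r * Real.exp (C * ∫ s in (0 : ℝ)..r, θ s / s))
      (Ioc (0 : ℝ) r₀))
    (hdiff : ∀ r ∈ Ioc (0 : ℝ) r₀, ∃ L : ℝ,
      HasDerivAt (fun t => Real.log (H t / t ^ (d - 1))) L r ∧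
        2 * N r / r - C * θ r / r ≤ L) :
    ∀ r₁ r₂ : ℝ, 0 < r₁ → r₁ < r₂ → r₂ ≤ r₀ →
      H r₁ / r₁ ^ (d - 1) *
          (r₂ / r₁) ^ (2 * (N r₁ * Real.exp (C * ∫ s in (0 : ℝ)..r₁, θ s / s)) *
            Real.exp (-(C * ∫ s in (0 : ℝ)..r₂, θ s / s))) *
          Real.exp (-(C * ∫ s in r₁..r₂, θ s / s)) ≤
        H r₂ / r₂ ^ (d - 1) := by
  intro r₁ r₂ hr₁ h12 h2r₀
  choose! L hL hLle using hdiff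
  have hr₂ : 0 < r₂ := hr₁.trans h12
  have hmem : ∀ x ∈ Icc r₁ r₂, x ∈ Ioc (0 : ℝ) r₀ := fun x hx =>
    ⟨hr₁.trans_le hx.1, hx.2.trans h2r₀⟩
  set K : ℝ := C * ∫ s in (0 : ℝ)..r₂, θ s / s with hK
  set a : ℝ := 2 * (N r₁ * Real.exp (C * ∫ s in (0 : ℝ)..r₁, θ s / s)) * Real.exp (-K)
    with ha
  set F : ℝ → ℝ := fun t => Real.log (H t / t ^ (d - 1)) with hF
  -- integrability of θ s / s on [r₁, r₂]
  have hθint : IntervalIntegrable (fun s => θ s / s) volume r₁ r₂ :=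
    hDini.mono_set (by
      rw [uIcc_of_le h12.le, uIcc_of_le hr₀.le]
      exact Icc_subset_Icc hr₁.le h2r₀)
  -- the comparison function φ
  set φ : ℝ → ℝ := fun x => a / x - C * (θ x / x) with hφ
  have hainv : IntervalIntegrable (fun x => a / x) volume r₁ r₂ := by
    apply ContinuousOn.intervalIntegrable
    apply ContinuousOn.div continuousOn_const continuousOn_id
    intro y hy
    rw [uIcc_of_le h12.le] at hy
    exact (hr₁.trans_le hy.1).ne'
  have hφint : IntervalIntegrable φ volume r₁ r₂ := hainv.sub (hθint.const_mul C)
  -- Ñ(r₁) lower bounds N on [r₁, r₂], after the exp correction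
  have hNlow : ∀ x ∈ Ioo r₁ r₂, a ≤ 2 * N x := by
    intro x hx
    have hxmem : x ∈ Ioc (0 : ℝ) r₀ := hmem x ⟨hx.1.le, hx.2.le⟩
    have hr₁mem : r₁ ∈ Ioc (0 : ℝ) r₀ := ⟨hr₁, (h12.trans_le h2r₀).le⟩
    have hmono' := hmono hr₁mem hxmem hx.1.le
    simp only at hmono'
    -- ∫₀^x ≤ ∫₀^{r₂}
    have hIle : (∫ s in (0 : ℝ)..x, θ s / s) ≤ ∫ s in (0 : ℝ)..r₂, θ s / s := by
      have hint0x : IntervalIntegrable (fun s => θ s / s) volume 0 x :=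
        hDini.mono_set (by
          rw [uIcc_of_le hxmem.1.le, uIcc_of_le hr₀.le]
          exact Icc_subset_Icc le_rfl hxmem.2)
      have hintx2 : IntervalIntegrable (fun s => θ s / s) volume x r₂ :=
        hDini.mono_set (by
          rw [uIcc_of_le hx.2.le, uIcc_of_le hr₀.le]
          exact Icc_subset_Icc hxmem.1.le h2r₀)
      have hsplit := intervalIntegral.integral_add_adjacent_intervals hint0x hintx2
      have hpos : 0 ≤ ∫ s in x..r₂, θ s / s := by
        apply intervalIntegral.integral_nonneg hx.2.le
        intro s hs
        exact div_nonneg (hθ s) ((hxmem.1.trans_le hs.1).le)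
      linarith
    have hEle : Real.exp (-K) ≤ Real.exp (-(C * ∫ s in (0 : ℝ)..x, θ s / s)) := by
      apply Real.exp_le_exp.2
      simp only [neg_le_neg_iff, hK]
      exact mul_le_mul_of_nonneg_left hIle hC
    have hNt0 : 0 ≤ N r₁ * Real.exp (C * ∫ s in (0 : ℝ)..r₁, θ s / s) :=
      mul_nonneg (hN0 r₁ hr₁mem) (Real.exp_pos _).le
    calc a ≤ 2 * (N r₁ * Real.exp (C * ∫ s in (0 : ℝ)..r₁, θ s / s)) *
          Real.exp (-(C * ∫ s in (0 : ℝ)..x, θ s / s)) := by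
            rw [ha]
            exact mul_le_mul_of_nonneg_left hEle (by positivity)
      _ ≤ 2 * (N x * Real.exp (C * ∫ s in (0 : ℝ)..x, θ s / s)) *
          Real.exp (-(C * ∫ s in (0 : ℝ)..x, θ s / s)) := by
            apply mul_le_mul_of_nonneg_right _ (Real.exp_pos _).le
            exact mul_le_mul_of_nonneg_left hmono' (by norm_num)
      _ = 2 * N x := by
            simp [mul_assoc, ← Real.exp_add]
  -- the FTC inequality
  have hFTC : (∫ y in r₁..r₂, φ y) ≤ F r₂ - F r₁ := by
    apply intervalIntegral.integral_le_sub_of_hasDeriv_right_of_le h12.le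
    · intro x hx
      exact (hL x (hmem x hx)).continuousAt.continuousWithinAt
    · intro x hx
      exact (hL x (hmem x ⟨hx.1.le, hx.2.le⟩)).hasDerivWithinAt
    · rw [← intervalIntegrable_iff_integrableOn_Icc_of_le h12.le]
      exact hφint
    · intro x hx
      have hxmem := hmem x ⟨hx.1.le, hx.2.le⟩
      have h1 := hLle x hxmem
      have hx0 : 0 < x := hxmem.1
      have : a / x ≤ 2 * N x / x := by
        gcongr
        exact hNlow x hx
      have hc : C * (θ x / x) = C * θ x / x := (mul_div_assoc C (θ x) x).symm
      simp only [hφ]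
      linarith
  -- compute the integral of φ
  have hφval : (∫ y in r₁..r₂, φ y) =
      a * Real.log (r₂ / r₁) - C * ∫ s in r₁..r₂, θ s / s := by
    have h1 : (∫ y in r₁..r₂, φ y) =
        (∫ y in r₁..r₂, a / y) - ∫ y in r₁..r₂, C * (θ y / y) :=
      intervalIntegral.integral_sub hainv (hθint.const_mul C)
    have h2 : (∫ y in r₁..r₂, a / y) = a * Real.log (r₂ / r₁) := by
      simp_rw [div_eq_mul_inv, intervalIntegral.integral_const_mul]
      rw [integral_inv (by
        rw [uIcc_of_le h12.le]
        exact fun h => (hr₁.trans_le h.1).ne' rfl), ← div_eq_mul_inv]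
    have h3 : (∫ y in r₁..r₂, C * (θ y / y)) = C * ∫ s in r₁..r₂, θ s / s :=
      intervalIntegral.integral_const_mul C _
    rw [h1, h2, h3]
  -- conclude
  have hA : 0 < H r₁ / r₁ ^ (d - 1) :=
    div_pos (hHpos r₁ ⟨hr₁, (h12.trans_le h2r₀).le⟩) (pow_pos hr₁ _)
  have hB : 0 < H r₂ / r₂ ^ (d - 1) :=
    div_pos (hHpos r₂ ⟨hr₂, h2r₀⟩) (pow_pos hr₂ _)
  have hkey : F r₁ + (a * Real.log (r₂ / r₁) - C * ∫ s in r₁..r₂, θ s / s) ≤ F r₂ := by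
    rw [← hφval]; linarith
  have hratio : (0 : ℝ) < r₂ / r₁ := div_pos hr₂ hr₁
  calc H r₁ / r₁ ^ (d - 1) * (r₂ / r₁) ^ a * Real.exp (-(C * ∫ s in r₁..r₂, θ s / s))
      = Real.exp (F r₁ + (a * Real.log (r₂ / r₁) - C * ∫ s in r₁..r₂, θ s / s)) := by
        rw [Real.exp_add, Real.exp_sub, Real.exp_log hA, Real.rpow_def_of_pos hratio]
        rw [Real.exp_neg]
        rw [mul_comm (Real.log (r₂ / r₁)) a]
        ring
    _ ≤ Real.exp (F r₂) := Real.exp_le_exp.2 hkey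
    _ = H r₂ / r₂ ^ (d - 1) := Real.exp_log hB
end
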